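/- arXiv:1602.04487 — 8 statements merged into one kernel-verified Lean document; each statement's English description precedes it below -/
import Mathlib

section
/- Let S = {0, 1, ..., N-1} with N ≥ 1, let m be a positive integer and b an integer. Then the number of quadruples (t,u,v,w) ∈ S⁴ with t+u = v+w and t+u ≡ b (mod m) equals ∑_{n ∈ ℤ} max(0, N - |b + n·m - (N-1)|)². -/
noncomputable def fZ (N : ℕ) (m : ℕ) (b : ℤ) : ℤ → ℝ :=
  fun n => (max 0 ((N : ℝ) - |(b : ℝ) + (n : ℝ) * (m : ℝ) - ((N : ℝ) - 1)|)) ^ 2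

lemma fZ_cast (N m : ℕ) (b : ℤ) (n : ℤ) :
    (b : ℝ) + (n : ℝ) * (m : ℝ) - ((N : ℝ) - 1)
      = ((b + n * m - ((N:ℤ) - 1) : ℤ) : ℝ) := by push_cast; ring

lemma fZ_vanish (N m : ℕ) (b : ℤ) (n : ℤ)
    (h : ¬ (0 ≤ b + n * m ∧ b + n * m ≤ 2*(N:ℤ) - 2)) (hN : 1 ≤ N) : fZ N m b n = 0 := by
  have hNle : (N : ℤ) ≤ |b + n * m - ((N:ℤ) - 1)| := by
    rcases abs_cases (b + n * m - ((N:ℤ) - 1)) with ⟨h1, h2⟩ | ⟨h1, h2⟩ <;> omega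
  have : (N : ℝ) - |(b : ℝ) + (n : ℝ) * (m : ℝ) - ((N : ℝ) - 1)| ≤ 0 := by
    rw [fZ_cast, ← Int.cast_abs]
    have : ((N:ℤ) : ℝ) ≤ ((|b + n * m - ((N:ℤ) - 1)| : ℤ) : ℝ) := by exact_mod_cast hNle
    push_cast at this ⊢
    linarith
  simp [fZ, max_eq_left this]

lemma abs_n_le (m : ℕ) (hm : 0 < m) (n : ℤ) : |n| ≤ |n * (m:ℤ)| := by
  rw [abs_mul]
  have h1 : |(m:ℤ)| = (m:ℤ) := abs_of_nonneg (by positivity)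
  rw [h1]
  calc |n| = |n| * 1 := by ring
    _ ≤ |n| * m := by
        apply mul_le_mul_of_nonneg_left _ (abs_nonneg n)
        exact_mod_cast hm

lemma cond_bound (N m : ℕ) (hm : 0 < m) (b : ℤ) (n : ℤ)
    (h : 0 ≤ b + n * m ∧ b + n * m ≤ 2*(N:ℤ) - 2) :
    n ∈ Finset.Icc (-(|b| + 2*(N:ℤ))) (|b| + 2*(N:ℤ)) := by
  have h2 := abs_n_le m hm n
  simp only [Finset.mem_Icc]
  rcases abs_cases n with ⟨e1, _⟩ | ⟨e1, _⟩ <;>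
    rcases abs_cases (n * (m:ℤ)) with ⟨e2, _⟩ | ⟨e2, _⟩ <;>
    rcases abs_cases b with ⟨e3, _⟩ | ⟨e3, _⟩ <;>
    omega

lemma pairCount (N s : ℕ) (hN : 1 ≤ N) (hs : s ≤ 2*N-2) :
    ((((Finset.range N) ×ˢ (Finset.range N)).filter (fun p : ℕ × ℕ => p.1 + p.2 = s)).card : ℤ)
      = (N : ℤ) - |(s:ℤ) - ((N:ℤ)-1)| := by
  have hcard : (((Finset.range N) ×ˢ (Finset.range N)).filter (fun p : ℕ × ℕ => p.1 + p.2 = s)).card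
      = (Finset.Icc (s+1-N) (min s (N-1))).card := by
    apply Finset.card_bij' (fun p _ => p.1) (fun t _ => (t, s - t))
    · intro p hp
      simp only [Finset.mem_filter, Finset.mem_product, Finset.mem_range] at hp
      simp only [Finset.mem_Icc]
      omega
    · intro t ht
      simp only [Finset.mem_Icc] at ht
      simp only [Finset.mem_filter, Finset.mem_product, Finset.mem_range]
      omega
    · intro p hp
      simp only [Finset.mem_filter, Finset.mem_product, Finset.mem_range] at hp
      ext <;> simp <;> omega
    · intro t ht; rfl
  rw [hcard, Nat.card_Icc]
  rcases abs_cases ((s:ℤ) - ((N:ℤ)-1)) with ⟨h1,h2⟩|⟨h1,h2⟩ <;> rw [h1] <;> omega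

lemma quadCount (N : ℕ) (hN : 1 ≤ N) (m : ℕ) (b : ℤ) :
    ((((Finset.range N) ×ˢ (Finset.range N) ×ˢ (Finset.range N) ×ˢ (Finset.range N)).filter
        (fun q : ℕ × ℕ × ℕ × ℕ => q.1 + q.2.1 = q.2.2.1 + q.2.2.2 ∧
          ((q.1 : ℤ) + (q.2.1 : ℤ)) ≡ b [ZMOD (m : ℤ)])).card)
      = ∑ s ∈ Finset.range (2*N-1),
          if ((s:ℤ)) ≡ b [ZMOD (m:ℤ)] then
            ((((Finset.range N) ×ˢ (Finset.range N)).filter (fun p : ℕ × ℕ => p.1 + p.2 = s)).card)^2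
          else 0 := by
  classical
  set S := Finset.range N
  set Q := ((S ×ˢ S ×ˢ S ×ˢ S).filter
        (fun q : ℕ × ℕ × ℕ × ℕ => q.1 + q.2.1 = q.2.2.1 + q.2.2.2 ∧
          ((q.1 : ℤ) + (q.2.1 : ℤ)) ≡ b [ZMOD (m : ℤ)])) with hQ
  have hmap : ∀ q ∈ Q, q.1 + q.2.1 ∈ Finset.range (2*N-1) := by
    intro q hq
    simp only [hQ, Finset.mem_filter, Finset.mem_product, Finset.mem_range, S] at hq ⊢
    omega
  rw [Finset.card_eq_sum_card_fiberwise hmap]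
  apply Finset.sum_congr rfl
  intro s hs
  by_cases hb : ((s:ℤ)) ≡ b [ZMOD (m:ℤ)]
  · rw [if_pos hb]
    set P := ((S ×ˢ S).filter (fun p : ℕ × ℕ => p.1 + p.2 = s)) with hP
    have : (Q.filter (fun q => q.1 + q.2.1 = s)).card = (P ×ˢ P).card := by
      refine Finset.card_bij' (fun q _ => ((q.1, q.2.1), (q.2.2.1, q.2.2.2)))
        (fun p _ => (p.1.1, (p.1.2, (p.2.1, p.2.2)))) ?_ ?_
        (fun q hq => rfl) (fun p hp => by simp)
      · intro q hq
        simp only [hQ, Finset.mem_filter, Finset.mem_product, Finset.mem_range, S] at hq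
        simp only [hP, Finset.mem_filter, Finset.mem_product, Finset.mem_range, S]
        omega
      · intro p hp
        simp only [hP, Finset.mem_filter, Finset.mem_product, Finset.mem_range, S] at hp
        simp only [hQ, Finset.mem_filter, Finset.mem_product, Finset.mem_range, S]
        have h1 : ((p.1.1 + p.1.2 : ℕ) : ℤ) = (s : ℤ) := by exact_mod_cast hp.1.2
        push_cast at h1
        exact ⟨⟨⟨by omega, by omega, by omega, by omega⟩, by omega, by rw [h1]; exact hb⟩, by omega⟩
    rw [this, Finset.card_product, sq]
  · rw [if_neg hb]
    rw [Finset.card_eq_zero]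
    ext q
    simp only [hQ, Finset.mem_filter, Finset.mem_product, Finset.notMem_empty, iff_false, S,
      Finset.mem_range]
    rintro ⟨⟨_, _, hmod⟩, hsum⟩
    apply hb
    have h1 : ((q.1 + q.2.1 : ℕ) : ℤ) = (s : ℤ) := by exact_mod_cast hsum
    push_cast at h1
    rwa [h1] at hmod

/-- Let `S = {0,1,...,N-1}` with `N ≥ 1`, `m` a positive integer, `b` an integer.
Then the number of quadruples `(t,u,v,w) ∈ S⁴` with `t+u = v+w` and `t+u ≡ b (mod m)`
equals `∑_{n ∈ ℤ} max(0, N - |b + n·m - (N-1)|)²`. -/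
theorem stmt_1 (N : ℕ) (hN : 1 ≤ N) (m : ℕ) (hm : 0 < m) (b : ℤ) :
    let S : Finset ℕ := Finset.range N
    (((S ×ˢ S ×ˢ S ×ˢ S).filter
        (fun q : ℕ × ℕ × ℕ × ℕ => q.1 + q.2.1 = q.2.2.1 + q.2.2.2 ∧
          ((q.1 : ℤ) + (q.2.1 : ℤ)) ≡ b [ZMOD (m : ℤ)])).card : ℝ)
      = ∑' n : ℤ, (max 0 ((N : ℝ) - |(b : ℝ) + (n : ℝ) * (m : ℝ) - ((N : ℝ) - 1)|)) ^ 2 := by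
  intro S
  classical
  have hmZ : (0:ℤ) < (m:ℤ) := by exact_mod_cast hm
  -- RHS as a finite sum
  set K : Finset ℤ := Finset.Icc (-(|b| + 2*(N:ℤ))) (|b| + 2*(N:ℤ)) with hK
  have htsum : ∑' n : ℤ, fZ N m b n = ∑ n ∈ K, fZ N m b n := by
    apply tsum_eq_sum
    intro n hn
    apply fZ_vanish N m b n _ hN
    intro hc
    exact hn (cond_bound N m hm b n hc)
  set K' : Finset ℤ := K.filter (fun n => 0 ≤ b + n * m ∧ b + n * m ≤ 2*(N:ℤ) - 2) with hK'
  have hKK' : ∑ n ∈ K, fZ N m b n = ∑ n ∈ K', fZ N m b n := by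
    rw [hK']
    rw [Finset.sum_filter_of_ne]
    intro n _ hne
    by_contra hc
    exact hne (fZ_vanish N m b n hc hN)
  -- LHS as finite sum over residues
  have hquad := quadCount N hN m b
  set R' : Finset ℕ := (Finset.range (2*N-1)).filter (fun s => ((s:ℤ)) ≡ b [ZMOD (m:ℤ)]) with hR'
  have hLHS : (((S ×ˢ S ×ˢ S ×ˢ S).filter
        (fun q : ℕ × ℕ × ℕ × ℕ => q.1 + q.2.1 = q.2.2.1 + q.2.2.2 ∧
          ((q.1 : ℤ) + (q.2.1 : ℤ)) ≡ b [ZMOD (m : ℤ)])).card : ℝ)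
      = ∑ s ∈ R', ((((Finset.range N) ×ˢ (Finset.range N)).filter
          (fun p : ℕ × ℕ => p.1 + p.2 = s)).card : ℝ)^2 := by
    rw [show (S = Finset.range N) from rfl, hquad, hR', Finset.sum_filter]
    push_cast
    rfl
  -- the bijection between K' and R'
  have hbij : ∑ n ∈ K', fZ N m b n
      = ∑ s ∈ R', ((((Finset.range N) ×ˢ (Finset.range N)).filter
          (fun p : ℕ × ℕ => p.1 + p.2 = s)).card : ℝ)^2 := by
    refine Finset.sum_nbij' (fun n => (b + n * m).toNat) (fun s => ((s:ℤ) - b) / m)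
      ?_ ?_ ?_ ?_ ?_
    · -- maps into R'
      intro n hn
      simp only [hK', Finset.mem_filter] at hn
      obtain ⟨_, h0, h1⟩ := hn
      simp only [hR', Finset.mem_filter, Finset.mem_range]
      constructor
      · omega
      · rw [Int.modEq_iff_dvd]
        refine ⟨-n, ?_⟩
        have hsZ : (((b + n * m).toNat : ℤ)) = b + n * m := Int.toNat_of_nonneg h0
        rw [hsZ]; ring
    · -- maps back into K'
      intro s hs
      simp only [hR', Finset.mem_filter, Finset.mem_range] at hs
      obtain ⟨hlt, hmod⟩ := hs
      have hdvd : (m:ℤ) ∣ (s:ℤ) - b := Int.ModEq.dvd hmod.symm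
      have hval : b + (((s:ℤ) - b) / m) * m = (s:ℤ) := by
        rw [Int.ediv_mul_cancel hdvd]; ring
      have hcond : 0 ≤ b + (((s:ℤ) - b) / m) * m ∧
          b + (((s:ℤ) - b) / m) * m ≤ 2*(N:ℤ) - 2 := by
        rw [hval]; omega
      simp only [hK', Finset.mem_filter]
      exact ⟨cond_bound N m hm b _ hcond, hcond⟩
    · -- left inverse
      intro n hn
      simp only [hK', Finset.mem_filter] at hn
      obtain ⟨_, h0, _⟩ := hn
      show (((b + n * m).toNat : ℤ) - b) / m = n
      rw [Int.toNat_of_nonneg h0]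
      rw [show b + n * m - b = n * m by ring]
      exact Int.mul_ediv_cancel n (by omega)
    · -- right inverse
      intro s hs
      simp only [hR', Finset.mem_filter, Finset.mem_range] at hs
      obtain ⟨hlt, hmod⟩ := hs
      have hdvd : (m:ℤ) ∣ (s:ℤ) - b := Int.ModEq.dvd hmod.symm
      have hval : b + (((s:ℤ) - b) / m) * m = (s:ℤ) := by
        rw [Int.ediv_mul_cancel hdvd]; ring
      show (b + (((s:ℤ) - b) / m) * m).toNat = s
      rw [hval, Int.toNat_natCast]
    · -- values agree
      intro n hn
      simp only [hK', Finset.mem_filter] at hn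
      obtain ⟨_, h0, h1⟩ := hn
      set s : ℕ := (b + n * m).toNat with hsdef
      have hsZ : (s : ℤ) = b + n * m := Int.toNat_of_nonneg h0
      have hsle : s ≤ 2*N - 2 := by omega
      have hpc := pairCount N s hN hsle
      have habs : |b + n * m - ((N:ℤ) - 1)| ≤ (N:ℤ) - 1 := by
        rcases abs_cases (b + n * m - ((N:ℤ) - 1)) with ⟨e1, _⟩ | ⟨e1, _⟩ <;> omega
      have hmax : max 0 ((N : ℝ) - |(b : ℝ) + (n : ℝ) * (m : ℝ) - ((N : ℝ) - 1)|)
          = (((N:ℤ) - |b + n * m - ((N:ℤ) - 1)| : ℤ) : ℝ) := by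
        rw [fZ_cast, ← Int.cast_abs]
        rw [max_eq_right]
        · push_cast; ring
        · have h2 : (0:ℤ) ≤ (N:ℤ) - |b + n * m - ((N:ℤ) - 1)| := by omega
          have h3 : ((0:ℤ):ℝ) ≤ (((N:ℤ) - |b + n * m - ((N:ℤ) - 1)| : ℤ) : ℝ) := by
            exact_mod_cast h2
          push_cast at h3 ⊢
          linarith
      show fZ N m b n = _
      rw [fZ, hmax]
      rw [show ((b + n * m - ((N:ℤ)-1))) = ((s:ℤ) - ((N:ℤ)-1)) by omega]
      rw [← hpc]
      push_cast
      ring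
  calc (((S ×ˢ S ×ˢ S ×ˢ S).filter _).card : ℝ)
      = ∑ s ∈ R', ((((Finset.range N) ×ˢ (Finset.range N)).filter
          (fun p : ℕ × ℕ => p.1 + p.2 = s)).card : ℝ)^2 := hLHS
    _ = ∑ n ∈ K', fZ N m b n := hbij.symm
    _ = ∑ n ∈ K, fZ N m b n := hKK'.symm
    _ = ∑' n : ℤ, fZ N m b n := htsum.symm
    _ = _ := by rfl
end

section
/- Let S be a finite set of consecutive integers with |S| = N ≥ 1, let m be a positive integer and a an integer. Then the number of quadruples (t,u,v,w) ∈ S⁴ with t+u = v+w and v-t ≡ a (mod m) equals ∑_{n ∈ ℤ} max(0, N - |a + n·m|)². -/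
/-!
Sort the quadruples by `d = v - t`. Those with a given `d` are exactly `(t, w + d, t + d, w)`
with `t, t + d, w, w + d ∈ S`, so there are `r(d)²` of them, where
`r(d) = #{t ∈ S | t + d ∈ S} = max(0, N - |d|)`; the congruence keeps the `d = a + n m`.
-/

open Finset

theorem Finset.card_eq_tsum_card_fiberwise {ι M R : Type*} [DecidableEq M]
    [AddCommMonoidWithOne R] [TopologicalSpace R] (f : ι → M) (s : Finset ι) :
    (#s : R) = ∑' b, (#{a ∈ s | f a = b} : R) := by
  rw [tsum_eq_sum (s := s.image f), card_eq_sum_card_image f s, Nat.cast_sum]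
  intro b hb
  rw [filter_false_of_mem fun a ha (hab : f a = b) => hb (hab ▸ mem_image_of_mem f ha),
    card_empty, Nat.cast_zero]

theorem Int.card_filter_add_mem_Icc (lo hi d : ℤ) :
    #{t ∈ Icc lo hi | t + d ∈ Icc lo hi} = (hi + 1 - lo - |d|).toNat := by
  have h : {t ∈ Icc lo hi | t + d ∈ Icc lo hi} = Icc (max lo (lo - d)) (min hi (hi - d)) := by
    ext t
    simp only [mem_filter, mem_Icc, le_min_iff, max_le_iff]
    omega
  rw [h, Int.card_Icc]
  congr 1
  rcases abs_cases d with ⟨h, _⟩ | ⟨h, _⟩ <;> omega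

theorem card_filter_add_eq_add_and_sub_eq {α : Type*} [AddCommGroup α] [DecidableEq α]
    (S : Finset α) (d : α) :
    #{q ∈ S ×ˢ S ×ˢ S ×ˢ S | q.1 + q.2.1 = q.2.2.1 + q.2.2.2 ∧ q.2.2.1 - q.1 = d} =
      #{t ∈ S | t + d ∈ S} ^ 2 := by
  rw [sq, ← card_product]
  refine (card_nbij' (fun p => (p.1, p.2 + d, p.1 + d, p.2)) (fun q => (q.1, q.2.2.2))
    ?_ ?_ ?_ ?_).symm
  · rintro ⟨t, w⟩
    simp only [coe_product, coe_filter, Set.mem_prod, Set.mem_ofPred_eq, mem_product, and_imp]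
    intro ht htd hw hwd
    exact ⟨⟨ht, hwd, htd, hw⟩, by abel, by abel⟩
  · rintro ⟨t, u, v, w⟩
    simp only [coe_product, coe_filter, Set.mem_prod, Set.mem_ofPred_eq, mem_product, and_imp]
    rintro ht hu hv hw hsum rfl
    refine ⟨⟨ht, by simpa using hv⟩, hw, ?_⟩
    convert hu using 1
    rw [← add_right_inj t, hsum]
    abel
  · rintro ⟨t, w⟩ -
    rfl
  · rintro ⟨t, u, v, w⟩
    simp only [coe_filter, mem_product, Set.mem_ofPred_eq, and_imp]
    rintro - - - - hsum rfl
    simp only [Prod.mk.injEq, true_and]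
    exact ⟨by rw [← add_right_inj t, hsum]; abel, add_sub_cancel t v, trivial⟩

theorem tsum_ite_intModEq {R : Type*} [AddCommMonoid R] [TopologicalSpace R] {m : ℤ}
    (hm : m ≠ 0) (a : ℤ) (f : ℤ → R) :
    ∑' d, (if d ≡ a [ZMOD m] then f d else 0) = ∑' n : ℤ, f (a + n * m) := by
  have hinj : Function.Injective (fun n : ℤ => a + n * m) := fun n k h => by
    simpa [hm] using h
  rw [← hinj.tsum_eq]
  · simp [Int.ModEq, Int.add_mul_emod_self_right]
  · intro d hd
    have hda : d ≡ a [ZMOD m] := by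
      by_contra h
      exact hd (if_neg h)
    obtain ⟨n, hn⟩ := hda.symm.dvd
    exact ⟨n, show a + n * m = d by linarith [mul_comm m n]⟩

theorem card_filter_add_eq_add_and_modEq_filter_sub_eq (S : Finset ℤ) (m a d : ℤ) :
    #{q ∈ {q ∈ S ×ˢ S ×ˢ S ×ˢ S | q.1 + q.2.1 = q.2.2.1 + q.2.2.2 ∧
        q.2.2.1 - q.1 ≡ a [ZMOD m]} | q.2.2.1 - q.1 = d} =
      if d ≡ a [ZMOD m] then #{t ∈ S | t + d ∈ S} ^ 2 else 0 := by
  rw [filter_filter]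
  split_ifs with hd
  · rw [← card_filter_add_eq_add_and_sub_eq]
    congr 1
    refine filter_congr fun q _ => ?_
    constructor
    · rintro ⟨⟨hsum, -⟩, hq⟩
      exact ⟨hsum, hq⟩
    · rintro ⟨hsum, hq⟩
      exact ⟨⟨hsum, hq ▸ hd⟩, hq⟩
  · exact card_eq_zero.2 <| filter_false_of_mem fun q _ h => hd (h.2 ▸ h.1.2)

theorem stmt_2_general (a₀ : ℤ) (N : ℕ) (m : ℕ) (hm : 0 < m) (a : ℤ) :
    let S : Finset ℤ := Finset.Icc a₀ (a₀ + N - 1)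
    (((S ×ˢ S ×ˢ S ×ˢ S).filter
        (fun q : ℤ × ℤ × ℤ × ℤ => q.1 + q.2.1 = q.2.2.1 + q.2.2.2 ∧
          q.2.2.1 - q.1 ≡ a [ZMOD (m : ℤ)])).card : ℝ)
      = ∑' n : ℤ, (max 0 ((N : ℝ) - |(a : ℝ) + (n : ℝ) * (m : ℝ)|)) ^ 2 := by
  intro S
  have hS (d : ℤ) : (#{t ∈ S | t + d ∈ S} : ℝ) = max 0 ((N : ℝ) - |(d : ℝ)|) := by
    rw [Int.card_filter_add_mem_Icc, show a₀ + N - 1 + 1 - a₀ = N by ring, ← Int.cast_natCast,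
      Int.toNat_eq_max]
    push_cast
    exact max_comm _ _
  rw [card_eq_tsum_card_fiberwise (fun q => q.2.2.1 - q.1)]
  simp_rw [card_filter_add_eq_add_and_modEq_filter_sub_eq, Nat.cast_ite, Nat.cast_pow, hS,
    Nat.cast_zero, tsum_ite_intModEq (Int.natCast_ne_zero.2 hm.ne'), Int.cast_add, Int.cast_mul,
    Int.cast_natCast]

/-- Let `S` be a finite set of `N ≥ 1` consecutive integers, `m` a positive integer,
`a` an integer.  Then the number of quadruples `(t,u,v,w) ∈ S⁴` with `t+u = v+w` and
`v - t ≡ a (mod m)` equals `∑_{n ∈ ℤ} max(0, N - |a + n·m|)²`. -/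
theorem stmt_2 (a₀ : ℤ) (N : ℕ) (hN : 1 ≤ N) (m : ℕ) (hm : 0 < m) (a : ℤ) :
    let S : Finset ℤ := Finset.Icc a₀ (a₀ + N - 1)
    (((S ×ˢ S ×ˢ S ×ˢ S).filter
        (fun q : ℤ × ℤ × ℤ × ℤ => q.1 + q.2.1 = q.2.2.1 + q.2.2.2 ∧
          q.2.2.1 - q.1 ≡ a [ZMOD (m : ℤ)])).card : ℝ)
      = ∑' n : ℤ, (max 0 ((N : ℝ) - |(a : ℝ) + (n : ℝ) * (m : ℝ)|)) ^ 2 :=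
  stmt_2_general a₀ N m hm a
end

section
/- Define Ω(x,y) = ∑_{n∈ℤ} max(0, 1 - |n·x - y|)² for x ≠ 0. For a fixed real x with 0 < |x| ≤ 2, the function y ↦ Ω(x,y) attains its global minimum value Ω(x, x/2), and this minimum is attained precisely when y ∈ {(n + 1/2)·|x| : n ∈ ℤ}. -/
/-!
Write `Ω(x, y) = ∑ₙ h(n x - y)` with the even bump `h t = max(0, 1 - |t|)²`. `Ω(x, ·)` is
`x`-periodic and depends only on `|x|`, so take `a = x > 0` and `y = a/2 + s`, `|s| ≤ a/2`.
Pairing `n` with `1 - n` gives `2 Ω(a, a/2 + s) = ∑ₙ (h(c - s) + h(c + s))`, `c = (n - 1/2) a`.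
Since `|s| ≤ a/2 ≤ |c|`, the points `c ± s` lie on the same side of `0` as `c`, where `h` agrees
with the convex function `u ↦ max(0, 1 - u)²` (or its mirror image), so each pair is at least
`2 h(c)`. For `n = 1` we have `c = a/2 ≤ 1`, so for `s ≠ 0` the values `max(0, 1 - |c ∓ s|)`
differ and the convexity inequality for the square is strict.
-/

/-- `Ω(x,y) = ∑_{n∈ℤ} max(0, 1 - |n·x - y|)²`. -/
noncomputable def Omega (x y : ℝ) : ℝ := ∑' n : ℤ, (max 0 (1 - |(n : ℝ) * x - y|)) ^ 2

noncomputable def hatSq (t : ℝ) : ℝ := max 0 (1 - |t|) ^ 2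

lemma Omega_eq_tsum_hatSq (x y : ℝ) : Omega x y = ∑' n : ℤ, hatSq (n * x - y) := rfl

lemma hatSq_neg (t : ℝ) : hatSq (-t) = hatSq t := by simp only [hatSq, abs_neg]

lemma abs_lt_one_of_hatSq_ne_zero {t : ℝ} (ht : hatSq t ≠ 0) : |t| < 1 := by
  by_contra! h
  exact ht (by simp [hatSq, max_eq_left (sub_nonpos.mpr h)])

lemma two_mul_sq_max_zero_midpoint_add_le (u v : ℝ) :
    2 * max 0 ((u + v) / 2) ^ 2 + (max 0 u - max 0 v) ^ 2 / 2 ≤ max 0 u ^ 2 + max 0 v ^ 2 := by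
  have h₀ : 0 ≤ max 0 ((u + v) / 2) := le_max_left _ _
  have h₁ : max 0 ((u + v) / 2) ≤ (max 0 u + max 0 v) / 2 :=
    max_le (by positivity) (by linarith [le_max_right 0 u, le_max_right 0 v])
  nlinarith

lemma two_mul_hatSq_add_le {c s : ℝ} (hs : |s| ≤ |c|) :
    2 * hatSq c + (max 0 (1 - |c - s|) - max 0 (1 - |c + s|)) ^ 2 / 2 ≤
      hatSq (c - s) + hatSq (c + s) := by
  have hmid : 1 - |c| = ((1 - |c - s|) + (1 - |c + s|)) / 2 := by
    rcases abs_le.mp hs with ⟨h₁, h₂⟩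
    rcases le_total 0 c with hc | hc
    · rw [abs_of_nonneg hc] at h₁ h₂
      rw [abs_of_nonneg hc, abs_of_nonneg (by linarith), abs_of_nonneg (by linarith)]
      ring
    · rw [abs_of_nonpos hc] at h₁ h₂
      rw [abs_of_nonpos hc, abs_of_nonpos (by linarith), abs_of_nonpos (by linarith)]
      ring
  rw [hatSq, hatSq, hatSq, hmid]
  exact two_mul_sq_max_zero_midpoint_add_le _ _

lemma two_mul_hatSq_le {c s : ℝ} (hs : |s| ≤ |c|) :
    2 * hatSq c ≤ hatSq (c - s) + hatSq (c + s) := by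
  linarith [two_mul_hatSq_add_le hs, sq_nonneg (max 0 (1 - |c - s|) - max 0 (1 - |c + s|))]

lemma two_mul_hatSq_lt {c s : ℝ} (hs₀ : s ≠ 0) (hs : |s| ≤ c) (hc : c ≤ 1) :
    2 * hatSq c < hatSq (c - s) + hatSq (c + s) := by
  wlog hs_pos : 0 < s generalizing s
  · have h := this (neg_ne_zero.mpr hs₀) (by rwa [abs_neg])
      (neg_pos.mpr (lt_of_le_of_ne (not_lt.mp hs_pos) hs₀))
    rwa [sub_neg_eq_add, ← sub_eq_add_neg, add_comm] at h
  rw [abs_of_pos hs_pos] at hs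
  have hgap : max 0 (1 - |c + s|) < max 0 (1 - |c - s|) := by
    rw [abs_of_nonneg (by linarith : 0 ≤ c + s), abs_of_nonneg (by linarith : 0 ≤ c - s)]
    exact max_lt (lt_max_of_lt_right (by linarith)) (lt_max_of_lt_right (by linarith))
  have hsc : |s| ≤ |c| := by rw [abs_of_pos hs_pos, abs_of_nonneg (by linarith)]; exact hs
  nlinarith [two_mul_hatSq_add_le hsc, sub_pos.mpr hgap]

lemma Omega_add_int_mul (x y : ℝ) (k : ℤ) : Omega x (y + k * x) = Omega x y := by
  simp only [Omega_eq_tsum_hatSq]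
  rw [← (Equiv.subRight k).tsum_eq (fun n : ℤ => hatSq (n * x - y))]
  congr 1 with n
  push_cast [Equiv.subRight_apply]
  ring_nf

lemma Omega_neg_left (x y : ℝ) : Omega (-x) y = Omega x y := by
  simp only [Omega_eq_tsum_hatSq]
  rw [← (Equiv.neg ℤ).tsum_eq]
  congr 1 with n
  push_cast [Equiv.neg_apply]
  ring_nf

lemma Omega_abs_left (x y : ℝ) : Omega |x| y = Omega x y := by
  rcases abs_choice x with h | h <;> rw [h]
  exact Omega_neg_left x y

lemma Omega_abs_half (x : ℝ) : Omega x (|x| / 2) = Omega x (x / 2) := by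
  rcases abs_choice x with h | h <;> rw [h]
  rw [← Omega_add_int_mul x (-x / 2) 1]
  congr 1
  push_cast
  ring

lemma summable_hatSq_int_mul_sub {x : ℝ} (hx : x ≠ 0) (y : ℝ) :
    Summable fun n : ℤ => hatSq (n * x - y) := by
  refine summable_of_hasFiniteSupport ?_
  have hbound : Function.support (fun n : ℤ => hatSq (n * x - y)) ⊆
      Metric.closedBall 0 ((1 + |y|) / |x|) := by
    intro n hn
    have h := abs_lt_one_of_hatSq_ne_zero hn
    rw [Metric.mem_closedBall, Int.dist_eq, Int.cast_zero, sub_zero, le_div_iff₀ (abs_pos.mpr hx),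
      ← abs_mul]
    linarith [abs_sub_abs_le_abs_sub ((n : ℝ) * x) y]
  exact (isCompact_closedBall _ _).finite_of_discrete.subset hbound

lemma tsum_add_tsum_one_sub {α : Type*} [AddCommMonoid α] [TopologicalSpace α] [T2Space α]
    [ContinuousAdd α] {f : ℤ → α} (hf : Summable f) :
    ∑' n, (f n + f (1 - n)) = ∑' n, f n + ∑' n, f n := by
  have hf' : Summable fun n => f (1 - n) := (Equiv.subLeft (1 : ℤ)).summable_iff.mpr hf
  rw [hf.tsum_add hf', ← (Equiv.subLeft (1 : ℤ)).tsum_eq f]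
  rfl

lemma Omega_half_add_add_self {a : ℝ} (ha : a ≠ 0) (s : ℝ) :
    Omega a (a / 2 + s) + Omega a (a / 2 + s) =
      ∑' n : ℤ, (hatSq ((n - 1 / 2) * a - s) + hatSq ((n - 1 / 2) * a + s)) := by
  rw [Omega_eq_tsum_hatSq, ← tsum_add_tsum_one_sub (summable_hatSq_int_mul_sub ha _)]
  congr 1 with n
  rw [← hatSq_neg ((((1 - n : ℤ) : ℝ)) * a - (a / 2 + s))]
  push_cast
  ring_nf


lemma summable_hatSq_pair {a : ℝ} (ha : a ≠ 0) (s : ℝ) :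
    Summable fun n : ℤ => hatSq ((n - 1 / 2) * a - s) + hatSq ((n - 1 / 2) * a + s) := by
  convert (summable_hatSq_int_mul_sub ha (a / 2 + s)).add
    (summable_hatSq_int_mul_sub ha (a / 2 - s)) using 4 <;> ring

lemma half_le_abs_int_sub_half (n : ℤ) : 1 / 2 ≤ |(n : ℝ) - 1 / 2| := by
  rcases le_or_gt n 0 with hn | hn
  · have : (n : ℝ) ≤ 0 := by exact_mod_cast hn
    rw [abs_of_neg (by linarith)]
    linarith
  · have : (1 : ℝ) ≤ n := by exact_mod_cast hn
    rw [abs_of_pos (by linarith)]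
    linarith

lemma half_le_abs_int_sub_half_mul {a : ℝ} (ha : 0 < a) (n : ℤ) :
    a / 2 ≤ |((n : ℝ) - 1 / 2) * a| := by
  rw [abs_mul, abs_of_pos ha]
  nlinarith [half_le_abs_int_sub_half n]

lemma Omega_half_le_Omega_half_add {a s : ℝ} (ha : 0 < a) (hs : |s| ≤ a / 2) :
    Omega a (a / 2) ≤ Omega a (a / 2 + s) := by
  suffices h : Omega a (a / 2 + 0) + Omega a (a / 2 + 0) ≤
      Omega a (a / 2 + s) + Omega a (a / 2 + s) by
    rw [add_zero] at h
    linarith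
  rw [Omega_half_add_add_self ha.ne', Omega_half_add_add_self ha.ne']
  refine (summable_hatSq_pair ha.ne' 0).tsum_le_tsum (fun n => ?_) (summable_hatSq_pair ha.ne' s)
  rw [sub_zero, add_zero, ← two_mul]
  exact two_mul_hatSq_le (hs.trans (half_le_abs_int_sub_half_mul ha n))

lemma Omega_half_lt_Omega_half_add {a s : ℝ} (ha : 0 < a) (ha₂ : a ≤ 2) (hs : |s| ≤ a / 2)
    (hs₀ : s ≠ 0) : Omega a (a / 2) < Omega a (a / 2 + s) := by
  suffices h : Omega a (a / 2 + 0) + Omega a (a / 2 + 0) <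
      Omega a (a / 2 + s) + Omega a (a / 2 + s) by
    rw [add_zero] at h
    linarith
  rw [Omega_half_add_add_self ha.ne', Omega_half_add_add_self ha.ne']
  refine (summable_hatSq_pair ha.ne' 0).tsum_lt_tsum (i := 1) (fun n => ?_) ?_
    (summable_hatSq_pair ha.ne' s)
  · rw [sub_zero, add_zero, ← two_mul]
    exact two_mul_hatSq_le (hs.trans (half_le_abs_int_sub_half_mul ha n))
  · have hc : ((1 : ℤ) - 1 / 2 : ℝ) * a = a / 2 := by push_cast; ring
    rw [sub_zero, add_zero, ← two_mul, hc]
    exact two_mul_hatSq_lt hs₀ hs (by linarith)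

lemma exists_eq_half_add_add_int_mul {a : ℝ} (ha : 0 < a) (y : ℝ) :
    ∃ s, |s| ≤ a / 2 ∧ ∃ k : ℤ, y = a / 2 + s + k * a := by
  set t := (y - a / 2) / a
  refine ⟨(t - round t) * a, ?_, round t, ?_⟩
  · rw [abs_mul, abs_of_pos ha]
    nlinarith [abs_sub_round t]
  · simp only [t]
    field_simp
    ring

lemma Omega_half_le {a : ℝ} (ha : 0 < a) (y : ℝ) : Omega a (a / 2) ≤ Omega a y := by
  obtain ⟨s, hs, k, rfl⟩ := exists_eq_half_add_add_int_mul ha y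
  rw [Omega_add_int_mul]
  exact Omega_half_le_Omega_half_add ha hs

lemma Omega_eq_Omega_half_iff {a : ℝ} (ha : 0 < a) (ha₂ : a ≤ 2) (y : ℝ) :
    Omega a y = Omega a (a / 2) ↔ ∃ n : ℤ, y = (n + 1 / 2) * a := by
  constructor
  · obtain ⟨s, hs, k, rfl⟩ := exists_eq_half_add_add_int_mul ha y
    rw [Omega_add_int_mul]
    intro h
    obtain rfl : s = 0 := by
      by_contra hs₀
      exact (Omega_half_lt_Omega_half_add ha ha₂ hs hs₀).ne' h
    exact ⟨k, by ring⟩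
  · rintro ⟨n, rfl⟩
    rw [← Omega_add_int_mul a (a / 2) n]
    ring_nf

/-- For fixed real `x` with `0 < |x| ≤ 2`, the function `y ↦ Ω(x,y)` attains its global
minimum value `Ω(x, x/2)`, exactly at the points `y = (n + 1/2)·|x|`, `n ∈ ℤ`. -/
theorem stmt_4 (x : ℝ) (hx0 : 0 < |x|) (hx2 : |x| ≤ 2) :
    (∀ y : ℝ, Omega x (x / 2) ≤ Omega x y) ∧
    (∀ y : ℝ, Omega x y = Omega x (x / 2) ↔ ∃ n : ℤ, y = ((n : ℝ) + 1 / 2) * |x|) := by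
  have hhalf : Omega x (x / 2) = Omega |x| (|x| / 2) := by
    rw [Omega_abs_left, Omega_abs_half]
  refine ⟨fun y => ?_, fun y => ?_⟩ <;> rw [hhalf, ← Omega_abs_left x y]
  · exact Omega_half_le hx0 y
  · exact Omega_eq_Omega_half_iff hx0 hx2 y
end

section
/- Define Φ(x) = Ω(1/x, 0) for x > 0, where Ω(x,y) = ∑_{n∈ℤ} max(0, 1 - |n·x - y|)². If m is a nonnegative integer and x ∈ [m, m+1], then Φ(x) = 2m + 1 - 2m(m+1)/x + m(m+1)(2m+1)/(3x²) (interpreting the formula as 1 when m = 0). -/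
/-- `Φ(x) = Ω(1/x, 0)` for `x > 0`. -/
noncomputable def Phi (x : ℝ) : ℝ := Omega (1 / x) 0

lemma sum_aux (m : ℕ) (x : ℝ) (hx : x ≠ 0) :
    ∑ n ∈ Finset.Icc (-(m : ℤ)) m, (1 - |(n : ℝ)| / x) ^ 2
      = 2 * m + 1 - 2 * m * (m + 1) / x + m * (m + 1) * (2 * m + 1) / (3 * x ^ 2) := by
  induction m with
  | zero =>
    norm_num
  | succ m ih =>
    have h1 : ((m : ℤ) + 1) ∉ Finset.Icc (-(m : ℤ)) m := by
      simp only [Finset.mem_Icc]; omega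
    have h2 : (-((m : ℤ) + 1)) ∉ insert ((m : ℤ) + 1) (Finset.Icc (-(m : ℤ)) m) := by
      simp only [Finset.mem_insert, Finset.mem_Icc]; omega
    have hset : Finset.Icc (-((m : ℕ) + 1 : ℤ)) ((m : ℕ) + 1)
        = insert (-((m : ℤ) + 1)) (insert ((m : ℤ) + 1) (Finset.Icc (-(m : ℤ)) m)) := by
      ext n
      simp only [Finset.mem_Icc, Finset.mem_insert]
      omega
    push_cast [hset, Finset.sum_insert h2, Finset.sum_insert h1, ih]
    have habs : |(m : ℝ) + 1| = (m : ℝ) + 1 := abs_of_nonneg (by positivity)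
    rw [abs_neg, habs]
    field_simp
    ring

/-- If `m` is a nonnegative integer and `x ∈ [m, m+1]` with `x > 0`, then
`Φ(x) = 2m + 1 - 2m(m+1)/x + m(m+1)(2m+1)/(3x²)`. -/
theorem stmt_6 (m : ℕ) (x : ℝ) (hx : 0 < x) (h1 : (m : ℝ) ≤ x) (h2 : x ≤ (m : ℝ) + 1) :
    Phi x = 2 * m + 1 - 2 * m * (m + 1) / x + m * (m + 1) * (2 * m + 1) / (3 * x ^ 2) := by
  have hx' : x ≠ 0 := ne_of_gt hx
  have key : Phi x = ∑ n ∈ Finset.Icc (-(m : ℤ)) m, (1 - |(n : ℝ)| / x) ^ 2 := by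
    rw [Phi, Omega]
    rw [tsum_eq_sum (s := Finset.Icc (-(m : ℤ)) m) ?_]
    · apply Finset.sum_congr rfl
      intro n hn
      simp only [Finset.mem_Icc] at hn
      have hna : |(n : ℝ)| ≤ m := by
        rw [abs_le]; constructor <;> [exact_mod_cast hn.1; exact_mod_cast hn.2]
      have hle : |(n : ℝ)| / x ≤ 1 := by
        rw [div_le_one hx]
        exact hna.trans h1
      have : |(n : ℝ) * (1 / x) - 0| = |(n : ℝ)| / x := by
        rw [sub_zero, abs_mul, abs_of_pos (by positivity : (0:ℝ) < 1 / x)]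
        ring
      rw [this, max_eq_right (by linarith)]
    · intro n hn
      simp only [Finset.mem_Icc, not_and_or, not_le] at hn
      have hna : (m : ℝ) + 1 ≤ |(n : ℝ)| := by
        have : (m : ℤ) + 1 ≤ |n| := by rcases abs_cases n with ⟨he, _⟩ | ⟨he, _⟩ <;> omega
        calc (m : ℝ) + 1 = ((m : ℤ) + 1 : ℤ) := by push_cast; ring
          _ ≤ (|n| : ℤ) := by exact_mod_cast this
          _ = |(n : ℝ)| := by push_cast; ring
      have : |(n : ℝ) * (1 / x) - 0| = |(n : ℝ)| / x := by
        rw [sub_zero, abs_mul, abs_of_pos (by positivity : (0:ℝ) < 1 / x)]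
        ring
      rw [this, max_eq_left]
      · norm_num
      · have : (1:ℝ) ≤ |(n : ℝ)| / x := by
          rw [le_div_iff₀ hx]
          linarith
        linarith
  rw [key, sum_aux m x hx']
end

section
/- Define Φ(x) = Ω(1/x, 0) for x > 0, where Ω(x,y) = ∑_{n∈ℤ} max(0, 1 - |n·x - y|)². Then Φ(x) = 1 for all x ∈ (0,1], and Φ(x) > 1 for all x > 1. -/
/-- `Φ(x) = 1` for `x ∈ (0,1]`, and `Φ(x) > 1` for `x > 1`. -/
theorem stmt_7 :
    (∀ x : ℝ, 0 < x → x ≤ 1 → Phi x = 1) ∧ (∀ x : ℝ, 1 < x → 1 < Phi x) := by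
  constructor
  · intro x hx hx1
    unfold Phi Omega
    rw [tsum_eq_single 0]
    · norm_num
    · intro n hn
      have h1 : (1 : ℝ) ≤ |(n : ℝ)| := by
        have : (1 : ℤ) ≤ |n| := Int.one_le_abs hn
        calc (1:ℝ) ≤ (|n| : ℤ) := by exact_mod_cast this
          _ = |(n : ℝ)| := by push_cast; ring
      have h2 : (1 : ℝ) ≤ 1 / x := by
        rw [le_div_iff₀ hx]; linarith
      have : (1 : ℝ) ≤ |(n : ℝ) * (1 / x) - 0| := by
        rw [sub_zero, abs_mul, abs_of_pos (by positivity : (0:ℝ) < 1 / x)]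
        calc (1:ℝ) = 1 * 1 := by ring
          _ ≤ |(n:ℝ)| * (1 / x) := by
            apply mul_le_mul h1 h2 (by norm_num) (abs_nonneg _)
      rw [max_eq_left (by linarith)]
      norm_num
  · intro x hx
    unfold Phi Omega
    set f : ℤ → ℝ := fun n => (max 0 (1 - |(n : ℝ) * (1 / x) - 0|)) ^ 2 with hf
    have hx0 : (0:ℝ) < x := by linarith
    have hsupp : ∀ n : ℤ, n ∉ Finset.Icc (-⌈x⌉) ⌈x⌉ → f n = 0 := by
      intro n hn
      simp only [Finset.mem_Icc, not_and_or, not_le] at hn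
      have hab : (x : ℝ) ≤ |(n : ℝ)| := by
        rcases hn with h | h
        · have : (⌈x⌉ : ℝ) < |(n:ℝ)| := by
            rw [← abs_neg]
            calc (⌈x⌉:ℝ) < ((-n : ℤ) : ℝ) := by exact_mod_cast (by omega : ⌈x⌉ < -n)
              _ ≤ |((-n : ℤ) : ℝ)| := le_abs_self _
              _ = |(-(n:ℝ))| := by push_cast; ring_nf
          linarith [Int.le_ceil x]
        · have : (⌈x⌉ : ℝ) < |(n:ℝ)| := by
            calc (⌈x⌉:ℝ) < (n : ℝ) := by exact_mod_cast h
              _ ≤ |(n:ℝ)| := le_abs_self _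
          linarith [Int.le_ceil x]
      have : (1 : ℝ) ≤ |(n : ℝ) * (1 / x) - 0| := by
        rw [sub_zero, abs_mul, abs_of_pos (by positivity : (0:ℝ) < 1 / x)]
        calc (1:ℝ) = x * (1/x) := by field_simp
          _ ≤ |(n:ℝ)| * (1/x) := by
            exact mul_le_mul_of_nonneg_right hab (by positivity)
      simp only [hf]
      rw [max_eq_left (by linarith)]
      norm_num
    have hsum : Summable f := summable_of_ne_finset_zero hsupp
    have hnn : ∀ n : ℤ, 0 ≤ f n := fun n => by positivity
    have hle : ∑ n ∈ ({0, 1} : Finset ℤ), f n ≤ ∑' n, f n :=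
      Summable.sum_le_tsum _ (fun n _ => hnn n) hsum
    have hfx : (1:ℝ)/x < 1 := by rw [div_lt_one hx0]; linarith
    have hfxpos : (0:ℝ) < 1/x := by positivity
    have h0 : f 0 = 1 := by simp [hf]
    have h1 : f 1 = (1 - 1/x)^2 := by
      simp only [hf]
      rw [Int.cast_one, one_mul, sub_zero, abs_of_pos hfxpos,
        max_eq_right (by linarith)]
    have hsumval : ∑ n ∈ ({0, 1} : Finset ℤ), f n = 1 + (1 - 1/x)^2 := by
      rw [Finset.sum_pair (by norm_num), h0, h1]
    have hpos : (0:ℝ) < (1 - 1/x)^2 := pow_pos (by linarith) 2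
    calc (1:ℝ) < 1 + (1 - 1/x)^2 := by linarith
      _ = ∑ n ∈ ({0, 1} : Finset ℤ), f n := hsumval.symm
      _ ≤ ∑' n, f n := hle
end

section
/- Define Ψ(x) = Ω(1/x, 1/(2x)) for x > 0, where Ω(x,y) = ∑_{n∈ℤ} max(0, 1 - |n·x - y|)². If m is a positive integer and x ∈ [m - 1/2, m + 1/2], then Ψ(x) = 2m - 2m²/x + m(4m² - 1)/(6x²). -/
/-- `Ψ(x) = Ω(1/x, 1/(2x))` for `x > 0`. -/
noncomputable def Psi (x : ℝ) : ℝ := Omega (1 / x) (1 / (2 * x))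

/-! The `n`-th term of `Ψ(x)` is `max(0, 1 - |2n - 1|/(2x))²`, which vanishes exactly when
`|2n - 1| ≥ 2x`. For `x ∈ [m - 1/2, m + 1/2]` the surviving terms are `1 - m ≤ n ≤ m`, and the
resulting finite sum of squares is a polynomial in `1/x` computed by induction on `m`. -/

lemma abs_intCast_mul_one_div_sub {x : ℝ} (hx : 0 < x) (n : ℤ) :
    |(n : ℝ) * (1 / x) - 1 / (2 * x)| = |2 * (n : ℝ) - 1| / (2 * x) := by
  rw [show (n : ℝ) * (1 / x) - 1 / (2 * x) = (2 * n - 1) / (2 * x) by field_simp,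
    abs_div, abs_of_pos (by positivity : (0 : ℝ) < 2 * x)]

lemma Psi_eq_sum_Icc (m : ℕ) {x : ℝ} (hx : 0 < x)
    (h1 : (m : ℝ) - 1 / 2 ≤ x) (h2 : x ≤ (m : ℝ) + 1 / 2) :
    Psi x = ∑ n ∈ Finset.Icc (1 - (m : ℤ)) m, (1 - |2 * (n : ℝ) - 1| / (2 * x)) ^ 2 := by
  have h2x : (0 : ℝ) < 2 * x := by positivity
  have hout : ∀ n ∉ Finset.Icc (1 - (m : ℤ)) m,
      (max 0 (1 - |(n : ℝ) * (1 / x) - 1 / (2 * x)|)) ^ 2 = 0 := by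
    intro n hn
    have hn' : (m : ℝ) + 1 ≤ n ∨ (n : ℝ) ≤ -m := by
      simp only [Finset.mem_Icc, not_and_or, not_le] at hn
      exact_mod_cast hn.symm.imp (by omega) (by omega)
    have hbig : 2 * x ≤ |2 * (n : ℝ) - 1| := by
      rcases hn' with h | h
      · rw [abs_of_nonneg (by linarith)]; linarith
      · rw [abs_of_nonpos (by linarith)]; linarith
    rw [abs_intCast_mul_one_div_sub hx,
      max_eq_left (sub_nonpos.2 ((one_le_div h2x).2 hbig)), zero_pow two_ne_zero]
  have hin : ∀ n ∈ Finset.Icc (1 - (m : ℤ)) m,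
      (max 0 (1 - |(n : ℝ) * (1 / x) - 1 / (2 * x)|)) ^ 2
        = (1 - |2 * (n : ℝ) - 1| / (2 * x)) ^ 2 := by
    intro n hn
    rw [Finset.mem_Icc] at hn
    have hlo : 1 - (m : ℝ) ≤ n := by exact_mod_cast hn.1
    have hhi : (n : ℝ) ≤ m := by exact_mod_cast hn.2
    have hsmall : |2 * (n : ℝ) - 1| ≤ 2 * x := abs_le.2 ⟨by linarith, by linarith⟩
    rw [abs_intCast_mul_one_div_sub hx, max_eq_right (sub_nonneg.2 ((div_le_one h2x).2 hsmall))]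
  rw [Psi, Omega, tsum_eq_sum hout, Finset.sum_congr rfl hin]

lemma sum_Icc_one_sub_abs_two_mul_sub_one_div_sq (x : ℝ) (m : ℕ) :
    ∑ n ∈ Finset.Icc (1 - (m : ℤ)) m, (1 - |2 * (n : ℝ) - 1| / (2 * x)) ^ 2
      = 2 * m - 2 * m ^ 2 / x + m * (4 * m ^ 2 - 1) / (6 * x ^ 2) := by
  induction m with
  | zero => simp
  | succ m ih =>
    have hIcc : Finset.Icc (1 - ((m + 1 : ℕ) : ℤ)) ((m + 1 : ℕ) : ℤ)
        = insert (-(m : ℤ)) (insert ((m : ℤ) + 1) (Finset.Icc (1 - (m : ℤ)) m)) := by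
      ext n
      simp only [Finset.mem_Icc, Finset.mem_insert]
      omega
    have hneg : -(m : ℤ) ∉ insert ((m : ℤ) + 1) (Finset.Icc (1 - (m : ℤ)) m) := by
      simp only [Finset.mem_Icc, Finset.mem_insert]
      omega
    have hpos : (m : ℤ) + 1 ∉ Finset.Icc (1 - (m : ℤ)) m := by
      simp only [Finset.mem_Icc]
      omega
    have hm : (0 : ℝ) ≤ 2 * m + 1 := by positivity
    rw [hIcc, Finset.sum_insert hneg, Finset.sum_insert hpos, ih]
    push_cast
    rw [show 2 * -(m : ℝ) - 1 = -(2 * m + 1) by ring, show 2 * ((m : ℝ) + 1) - 1 = 2 * m + 1 by ring,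
      abs_neg, abs_of_nonneg hm]
    simp only [div_eq_mul_inv, mul_inv]
    ring

/-- If `m` is a positive integer and `x ∈ [m - 1/2, m + 1/2]`, then
`Ψ(x) = 2m - 2m²/x + m(4m² - 1)/(6x²)`. -/
theorem stmt_8 (m : ℕ) (hm : 1 ≤ m) (x : ℝ)
    (h1 : (m : ℝ) - 1 / 2 ≤ x) (h2 : x ≤ (m : ℝ) + 1 / 2) :
    Psi x = 2 * m - 2 * m ^ 2 / x + m * (4 * m ^ 2 - 1) / (6 * x ^ 2) := by
  have hx : 0 < x := by
    have : (1 : ℝ) ≤ m := by exact_mod_cast hm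
    linarith
  rw [Psi_eq_sum_Icc m hx h1 h2, sum_Icc_one_sub_abs_two_mul_sub_one_div_sq]
end

section
/- The function f(Λ) = Ω(1/Λ, 0) defined for Λ > 0, where Ω(x,y) = ∑_{n∈ℤ} max(0, 1 - |n·x - y|)², achieves a global minimum value of 1, attained exactly for Λ ∈ (0, 1]. -/
lemma term_zero_of_big {Λ : ℝ} (hΛ : 0 < Λ) {n : ℤ} (h : Λ ≤ |(n : ℝ)|) :
    (max 0 (1 - |(n : ℝ) * (1 / Λ) - 0|)) ^ 2 = 0 := by
  have h1 : (1 : ℝ) ≤ |(n : ℝ) * (1 / Λ) - 0| := by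
    rw [sub_zero, abs_mul, abs_of_pos (by positivity : (0:ℝ) < 1 / Λ)]
    rw [mul_one_div, le_div_iff₀ hΛ, one_mul]
    exact h
  have : max 0 (1 - |(n : ℝ) * (1 / Λ) - 0|) = 0 := by
    rw [max_eq_left (by linarith)]
  rw [this]; ring

lemma summ {Λ : ℝ} (hΛ : 0 < Λ) :
    Summable (fun n : ℤ => (max 0 (1 - |(n : ℝ) * (1 / Λ) - 0|)) ^ 2) := by
  apply summable_of_ne_finset_zero (s := Finset.Icc (-⌈Λ⌉) ⌈Λ⌉)
  intro n hn
  apply term_zero_of_big hΛ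
  rw [Finset.mem_Icc, not_and_or, not_le, not_le] at hn
  have hc : 0 < ⌈Λ⌉ := Int.ceil_pos.2 hΛ
  have : ⌈Λ⌉ < |n| := by
    rcases hn with h | h
    · rw [abs_of_neg (by omega : n < 0)]; omega
    · rw [abs_of_pos (by omega : (0:ℤ) < n)]; omega
  have : (⌈Λ⌉ : ℝ) < |(n : ℝ)| := by
    rw [← Int.cast_abs]; exact_mod_cast this
  linarith [Int.le_ceil Λ]

/-- The function `Λ ↦ Ω(1/Λ, 0)`, defined for `Λ > 0`, achieves a global minimum value
of `1`, attained exactly for `Λ ∈ (0, 1]`. -/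
theorem stmt_12 :
    (∀ Λ : ℝ, 0 < Λ → 1 ≤ Omega (1 / Λ) 0) ∧
    (∀ Λ : ℝ, 0 < Λ → (Omega (1 / Λ) 0 = 1 ↔ Λ ≤ 1)) := by
  have key0 : ∀ Λ : ℝ, (max 0 (1 - |((0:ℤ) : ℝ) * (1 / Λ) - 0|)) ^ 2 = 1 := by
    intro Λ; norm_num
  constructor
  · intro Λ hΛ
    have := Summable.le_tsum (summ hΛ) 0 (fun i _ => by positivity)
    rw [key0 Λ] at this
    exact this
  · intro Λ hΛ
    constructor
    · intro h
      by_contra hle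
      push_neg at hle
      have h1 : (0:ℝ) < (1 - 1/Λ) := by
        have : 1/Λ < 1 := by rw [div_lt_one hΛ]; exact hle
        linarith
      have hterm : (max 0 (1 - |((1:ℤ) : ℝ) * (1 / Λ) - 0|)) ^ 2 = (1 - 1/Λ)^2 := by
        rw [Int.cast_one, one_mul, sub_zero, abs_of_pos (by positivity), max_eq_right (by linarith)]
      have hsum := Summable.sum_le_tsum ({0, 1} : Finset ℤ) (fun i _ => by positivity) (summ hΛ)
      unfold Omega at h
      rw [Finset.sum_pair (by norm_num), key0 Λ, hterm, h] at hsum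
      nlinarith
    · intro h
      have : Omega (1 / Λ) 0 = (max 0 (1 - |((0:ℤ) : ℝ) * (1 / Λ) - 0|)) ^ 2 := by
        apply tsum_eq_single
        intro n hn
        apply term_zero_of_big hΛ
        have : (1:ℝ) ≤ |(n:ℝ)| := by
          rw [← Int.cast_abs]
          exact_mod_cast Int.one_le_abs (by exact_mod_cast hn)
        linarith
      rw [this, key0]
end

section
/- Let f and g be complex-valued sequences of the same length with unimodular terms, and define the autocorrelation demerit factor DF(f) = (∑_{s≠0} |C_{f,f}(s)|²)/|C_{f,f}(0)|² and the crosscorrelation demerit factor CDF(f,g) = (∑_{s∈ℤ} |C_{f,g}(s)|²)/(|C_{f,f}(0)|·|C_{g,g}(0)|), where C_{f,g}(s) = ∑_{j∈ℤ} f_j·conj(g_{j+s}) with sequences extended by zero. Then 1 - √(DF(f)·DF(g)) ≤ CDF(f,g) ≤ 1 + √(DF(f)·DF(g)). -/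
/-!
Expanding `|C_{f,g}(s)|²` and summing over the shift `s` gives
`∑ₛ |C_{f,g}(s)|² = ∑ₛ C_{f,f}(s) conj C_{g,g}(s)`; for the polynomials `f(z)`, `g(z)` on the
unit circle this is Parseval's identity for `‖f ḡ‖₂² = ⟨|f|², |g|²⟩`. The `s = 0` term on the
right is `‖f‖₂² ‖g‖₂² = |C_{f,f}(0)| |C_{g,g}(0)|`, and Cauchy–Schwarz bounds the remaining terms
by `√(∑_{s ≠ 0} |C_{f,f}(s)|² · ∑_{s ≠ 0} |C_{g,g}(s)|²)`. Dividing by `|C_{f,f}(0)| |C_{g,g}(0)|`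
gives the bound on the crosscorrelation demerit factor.
-/

open Finset ComplexConjugate
open scoped Pointwise

theorem Real.tsum_mul_le_sqrt_mul_sqrt {ι : Type*} {f g : ι → ℝ} (hf : ∀ i, 0 ≤ f i)
    (hg : ∀ i, 0 ≤ g i) (hf_sum : Summable fun i => f i ^ 2) (hg_sum : Summable fun i => g i ^ 2) :
    ∑' i, f i * g i ≤ √(∑' i, f i ^ 2) * √(∑' i, g i ^ 2) := by
  have := Real.inner_le_Lp_mul_Lq_tsum_of_nonneg .two_two hf hg
    (by simpa only [Real.rpow_two] using hf_sum) (by simpa only [Real.rpow_two] using hg_sum)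
  simpa only [Real.rpow_two, Real.sqrt_eq_rpow] using this

theorem Finset.sum_sub_comp_add {G M : Type*} [AddCommGroup G] [DecidableEq G] [AddCommMonoid M]
    [TopologicalSpace M] {I : Finset G} {h : G → M} (hh : ∀ a ∉ I, h a = 0) {j : G}
    (hj : j ∈ I) : ∑ s ∈ I - I, h (j + s) = ∑ a ∈ I, h a := by
  -- both sides are the translation-invariant sum `∑' a, h a` over all of `G`
  rw [← tsum_eq_sum (L := .unconditional G) hh, ← Equiv.tsum_eq (Equiv.addLeft j) h]
  refine (tsum_eq_sum fun s hs => hh _ fun hs' => hs ?_).symm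
  simpa using sub_mem_sub hs' hj

section Correlation

variable {G 𝕜 : Type*} [AddCommGroup G] [RCLike 𝕜]

noncomputable def correlation (u v : G → 𝕜) (s : G) : 𝕜 :=
  ∑' j, u j * conj (v (j + s))

noncomputable def demeritFactor (u : G → 𝕜) : ℝ :=
  (∑' s : {s : G // s ≠ 0}, ‖correlation u u s‖ ^ 2) / ‖correlation u u 0‖ ^ 2

noncomputable def crossDemeritFactor (f g : G → 𝕜) : ℝ :=
  (∑' s, ‖correlation f g s‖ ^ 2) / (‖correlation f f 0‖ * ‖correlation g g 0‖)

variable {I : Finset G} {u v f g : G → 𝕜}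

theorem correlation_eq_sum (hu : ∀ j ∉ I, u j = 0) (v : G → 𝕜) (s : G) :
    correlation u v s = ∑ j ∈ I, u j * conj (v (j + s)) :=
  tsum_eq_sum fun j hj => by rw [hu j hj, zero_mul]

theorem correlation_eq_zero_of_notMem_sub [DecidableEq G] (hu : ∀ j ∉ I, u j = 0)
    (hv : ∀ j ∉ I, v j = 0) {s : G} (hs : s ∉ I - I) : correlation u v s = 0 := by
  rw [correlation_eq_sum hu]
  refine sum_eq_zero fun j hj => ?_
  have hjs : j + s ∉ I := fun h => hs (by simpa using sub_mem_sub h hj)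
  rw [hv _ hjs, map_zero, mul_zero]

theorem summable_norm_sq_correlation (hu : ∀ j ∉ I, u j = 0) (hv : ∀ j ∉ I, v j = 0) :
    Summable fun s => ‖correlation u v s‖ ^ 2 := by
  classical
  exact summable_of_ne_finset_zero (s := I - I) fun _ hs => by
    rw [correlation_eq_zero_of_notMem_sub hu hv hs, norm_zero, sq, zero_mul]

theorem correlation_self_zero (u : G → 𝕜) :
    correlation u u 0 = ((∑' j, ‖u j‖ ^ 2 : ℝ) : 𝕜) := by
  simp only [correlation, add_zero, RCLike.mul_conj, RCLike.ofReal_tsum, RCLike.ofReal_pow]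

theorem norm_correlation_self_zero (u : G → 𝕜) : ‖correlation u u 0‖ = ∑' j, ‖u j‖ ^ 2 := by
  rw [correlation_self_zero, RCLike.norm_ofReal, abs_of_nonneg (tsum_nonneg fun _ => by positivity)]

theorem norm_correlation_self_zero_pos (hu : ∀ j ∉ I, u j = 0) (hu0 : u ≠ 0) :
    0 < ‖correlation u u 0‖ := by
  obtain ⟨j, hj⟩ := Function.ne_iff.mp hu0
  rw [norm_correlation_self_zero]
  refine Summable.tsum_pos ?_ (fun _ => by positivity) j (pow_pos (norm_pos_iff.mpr hj) 2)
  exact summable_of_ne_finset_zero fun i hi => by rw [hu i hi, norm_zero, sq, zero_mul]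

theorem sum_sub_conj_mul_eq_conj_correlation [DecidableEq G] (hv : ∀ j ∉ I, v j = 0) {j : G}
    (hj : j ∈ I) (k : G) :
    ∑ s ∈ I - I, conj (v (j + s)) * v (k + s) = conj (correlation v v (k - j)) := by
  rw [correlation_eq_sum hv, map_sum,
    ← sum_sub_comp_add (h := fun a => conj (v a * conj (v (a + (k - j))))) _ hj]
  · refine sum_congr rfl fun s _ => ?_
    rw [map_mul, RCLike.conj_conj]
    congr 2
    abel
  · intro a ha
    rw [hv a ha, zero_mul, map_zero]

theorem tsum_correlation_mul_conj (hf : ∀ j ∉ I, f j = 0) (hg : ∀ j ∉ I, g j = 0) :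
    ∑' s, correlation f g s * conj (correlation f g s) =
      ∑' s, correlation f f s * conj (correlation g g s) := by
  classical
  set D := ∑ j ∈ I, ∑ k ∈ I, f j * conj (f k) * conj (correlation g g (k - j))
  have hfg : ∑ s ∈ I - I, correlation f g s * conj (correlation f g s) = D := by
    calc _ = ∑ s ∈ I - I, ∑ j ∈ I, ∑ k ∈ I,
          f j * conj (f k) * (conj (g (j + s)) * g (k + s)) := by
          refine sum_congr rfl fun s _ => ?_
          simp only [correlation_eq_sum hf, map_sum, map_mul, RCLike.conj_conj, sum_mul_sum]
          exact sum_congr rfl fun j _ => sum_congr rfl fun k _ => by ring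
      _ = ∑ j ∈ I, ∑ k ∈ I, f j * conj (f k) * ∑ s ∈ I - I, conj (g (j + s)) * g (k + s) := by
          simp only [mul_sum]
          rw [sum_comm]
          exact sum_congr rfl fun j _ => sum_comm
      _ = D := sum_congr rfl fun j hj => sum_congr rfl fun k _ => by
          rw [sum_sub_conj_mul_eq_conj_correlation hg hj]
  have hff_gg : ∑ s ∈ I - I, correlation f f s * conj (correlation g g s) = D := by
    calc _ = ∑ j ∈ I, f j * ∑ s ∈ I - I, conj (f (j + s)) * conj (correlation g g s) := by
          simp only [correlation_eq_sum hf f, sum_mul, mul_sum, mul_assoc]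
          exact sum_comm
      _ = ∑ j ∈ I, f j * ∑ k ∈ I, conj (f k) * conj (correlation g g (k - j)) :=
          sum_congr rfl fun j hj => by
            rw [← sum_sub_comp_add (fun a ha => by rw [hf a ha, map_zero, zero_mul]) hj]
            simp only [add_sub_cancel_left]
      _ = D := by simp only [D, mul_sum, mul_assoc]
  rw [tsum_eq_sum fun s hs => by rw [correlation_eq_zero_of_notMem_sub hf hg hs, zero_mul],
    tsum_eq_sum fun s hs => by rw [correlation_eq_zero_of_notMem_sub hf hf hs, zero_mul],
    hfg, hff_gg]

theorem abs_tsum_norm_sq_correlation_sub_le (hf : ∀ j ∉ I, f j = 0) (hg : ∀ j ∉ I, g j = 0) :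
    |∑' s, ‖correlation f g s‖ ^ 2 - ‖correlation f f 0‖ * ‖correlation g g 0‖| ≤
      √((∑' s : {s : G // s ≠ 0}, ‖correlation f f s‖ ^ 2) *
        ∑' s : {s : G // s ≠ 0}, ‖correlation g g s‖ ^ 2) := by
  classical
  set a : G → 𝕜 := fun s => correlation f f s * conj (correlation g g s)
  have ha : Summable a := summable_of_ne_finset_zero (s := I - I) fun s hs => by
    simp only [a, correlation_eq_zero_of_notMem_sub hf hf hs, zero_mul]
  have ha0 : a 0 = ((‖correlation f f 0‖ * ‖correlation g g 0‖ : ℝ) : 𝕜) := by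
    rw [norm_correlation_self_zero, norm_correlation_self_zero]
    simp only [a, correlation_self_zero, RCLike.conj_ofReal, RCLike.ofReal_mul]
  have hsplit : ∑' s, ‖correlation f g s‖ ^ 2 - ‖correlation f f 0‖ * ‖correlation g g 0‖ =
      RCLike.re (∑' s : {s : G // s ≠ 0}, a s) := by
    have h := congrArg RCLike.re (ha.tsum_subtype_add_tsum_subtype_compl {0})
    rw [tsum_singleton, map_add, ha0, RCLike.ofReal_re, ← tsum_correlation_mul_conj hf hg] at h
    simp only [RCLike.mul_conj, ← RCLike.ofReal_pow, ← RCLike.ofReal_tsum, RCLike.ofReal_re] at h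
    -- `↥({0}ᶜ)` is `{s // s ≠ 0}` only up to unfolding
    change _ + RCLike.re (∑' s : {s : G // s ≠ 0}, a s) = _ at h
    linarith
  have hsq (u : G → 𝕜) (hu : ∀ j ∉ I, u j = 0) :
      Summable fun s : {s : G // s ≠ 0} => ‖correlation u u s‖ ^ 2 :=
    (summable_norm_sq_correlation hu hu).subtype _
  rw [hsplit, Real.sqrt_mul (tsum_nonneg fun _ => by positivity)]
  calc _ ≤ ‖∑' s : {s : G // s ≠ 0}, a s‖ := RCLike.abs_re_le_norm _
    _ ≤ ∑' s : {s : G // s ≠ 0}, ‖correlation f f s‖ * ‖correlation g g s‖ := by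
      simp only [a, ← RCLike.norm_conj (correlation g g _), ← norm_mul]
      exact norm_tsum_le_tsum_norm (ha.norm.subtype _)
    _ ≤ _ := Real.tsum_mul_le_sqrt_mul_sqrt (fun _ => norm_nonneg _) (fun _ => norm_nonneg _)
      (hsq f hf) (hsq g hg)

theorem abs_crossDemeritFactor_sub_one_le (hf : ∀ j ∉ I, f j = 0) (hg : ∀ j ∉ I, g j = 0)
    (hf0 : f ≠ 0) (hg0 : g ≠ 0) :
    |crossDemeritFactor f g - 1| ≤ √(demeritFactor f * demeritFactor g) := by
  have hpos :=
    mul_pos (norm_correlation_self_zero_pos hf hf0) (norm_correlation_self_zero_pos hg hg0)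
  have hcross : crossDemeritFactor f g - 1 =
      (∑' s, ‖correlation f g s‖ ^ 2 - ‖correlation f f 0‖ * ‖correlation g g 0‖) /
        (‖correlation f f 0‖ * ‖correlation g g 0‖) := by
    rw [crossDemeritFactor, sub_div, div_self hpos.ne']
  have hdemerit : √(demeritFactor f * demeritFactor g) =
      √((∑' s : {s : G // s ≠ 0}, ‖correlation f f s‖ ^ 2) *
        ∑' s : {s : G // s ≠ 0}, ‖correlation g g s‖ ^ 2) /
        (‖correlation f f 0‖ * ‖correlation g g 0‖) := by
    rw [demeritFactor, demeritFactor, div_mul_div_comm, ← mul_pow, Real.sqrt_div' _ (by positivity),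
      Real.sqrt_sq hpos.le]
  rw [hcross, hdemerit, abs_div, abs_of_pos hpos]
  exact div_le_div_of_nonneg_right (abs_tsum_norm_sq_correlation_sub_le hf hg) hpos.le

end Correlation

/-- Pursley–Sarwate bound: for unimodular sequences `f, g` of the same length `ℓ ≥ 1`
(extended by zero outside `{0,...,ℓ-1}`), with aperiodic crosscorrelation
`C_{u,v}(s) = ∑_j u j * conj (v (j+s))`, autocorrelation demerit factor
`DF(u) = (∑_{s≠0} |C_{u,u}(s)|²)/|C_{u,u}(0)|²` and crosscorrelation demerit factor
`CDF(f,g) = (∑_s |C_{f,g}(s)|²)/(|C_{f,f}(0)|·|C_{g,g}(0)|)`, one has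
`1 - √(DF(f)·DF(g)) ≤ CDF(f,g) ≤ 1 + √(DF(f)·DF(g))`. -/
theorem stmt_19 (ℓ : ℕ) (hℓ : 1 ≤ ℓ) (f g : ℤ → ℂ)
    (hfuni : ∀ j : ℤ, 0 ≤ j → j < (ℓ : ℤ) → ‖f j‖ = 1)
    (hguni : ∀ j : ℤ, 0 ≤ j → j < (ℓ : ℤ) → ‖g j‖ = 1)
    (hfz : ∀ j : ℤ, j < 0 ∨ (ℓ : ℤ) ≤ j → f j = 0)
    (hgz : ∀ j : ℤ, j < 0 ∨ (ℓ : ℤ) ≤ j → g j = 0) :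
    let C : (ℤ → ℂ) → (ℤ → ℂ) → ℤ → ℂ :=
      fun u v s => ∑' j : ℤ, u j * (starRingEnd ℂ) (v (j + s))
    let DF : (ℤ → ℂ) → ℝ := fun u =>
      (∑' s : {s : ℤ // s ≠ 0}, ‖C u u (s : ℤ)‖ ^ 2) /
        ‖C u u 0‖ ^ 2
    let CDF : ℝ := (∑' s : ℤ, ‖C f g s‖ ^ 2) /
      (‖C f f 0‖ * ‖C g g 0‖)
    1 - Real.sqrt (DF f * DF g) ≤ CDF ∧ CDF ≤ 1 + Real.sqrt (DF f * DF g) := by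
  show 1 - √(demeritFactor f * demeritFactor g) ≤ crossDemeritFactor f g ∧
    crossDemeritFactor f g ≤ 1 + √(demeritFactor f * demeritFactor g)
  have hsupp (u : ℤ → ℂ) (hu : ∀ j : ℤ, j < 0 ∨ (ℓ : ℤ) ≤ j → u j = 0) :
      ∀ j ∉ Ico (0 : ℤ) ℓ, u j = 0 := fun j hj => hu j (by rw [mem_Ico] at hj; omega)
  have hne (u : ℤ → ℂ) (hu : ∀ j : ℤ, 0 ≤ j → j < (ℓ : ℤ) → ‖u j‖ = 1) : u ≠ 0 := fun h0 => by
    simpa [h0] using hu 0 le_rfl (by omega)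
  have h := abs_sub_le_iff.mp <| abs_crossDemeritFactor_sub_one_le (hsupp f hfz) (hsupp g hgz)
    (hne f hfuni) (hne g hguni)
  exact ⟨by linarith [h.2], by linarith [h.1]⟩
end
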